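/- arXiv:2604.04615 — 2 statements merged into one kernel-verified Lean document; each statement's English description precedes it below -/
import Mathlib

section
/- Let f₁, f₂ : [0,1] → [0,1] be continuous with f₁(0) = f₂(0) = 0, f₁(1) = f₂(1) = 1. Then the set N = {(x,y) ∈ [0,1]² : f₁(x) = f₂(y)} has a connected component containing both the point (0,0) and the point (1,1). -/
/-!
Sample `f₁` and `f₂` on a grid of mesh `1 / N` and follow `M f₁`, `M f₂` to within `1` by integer
walks with steps `±1` that go from `0` to `M` inside `[0, M]`; a greedy walk does this once `M f`
moves by at most `1 / 2` per grid step. Join two pairs of indices at which the walks have equal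
heights when both indices move by one step. Counting neighbours above and below, every such pair
other than `(0, 0)` and the pair of final indices has even degree, so by the handshake lemma these
two are connected. The grid rectangles along a path between them form a connected set containing
`(0, 0)` and `(1, 1)` on which `|f₁ x - f₂ y| ≤ 3 / M`. The level set is the decreasing
intersection of these approximate level sets, and in the compact square a separation of the limit
would already separate one of them.
-/

open Filter Topology
open scoped unitInterval

namespace SimpleGraph

open Finset

variable {V : Type*} {G : SimpleGraph V}

theorem reachable_of_odd_degree [Fintype V] [DecidableRel G.Adj] {u v : V}
    (hu : Odd (G.degree u)) (heven : ∀ w, w ≠ u → w ≠ v → Even (G.degree w)) :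
    G.Reachable u v := by
  classical
  let H : SimpleGraph V :=
    { Adj x y := G.Adj x y ∧ G.Reachable u x
      symm := ⟨fun _ _ h ↦ ⟨h.1.symm, h.2.trans h.1.reachable⟩⟩
      loopless := ⟨fun _ h ↦ h.1.ne rfl⟩ }
  have hdeg : ∀ w, H.degree w = if G.Reachable u w then G.degree w else 0 := by
    intro w
    split_ifs with hw
    · simp only [degree, neighborFinset_eq_filter, H, hw, and_true]
    · simp [degree, neighborFinset_eq_filter, H, hw]
  obtain ⟨w, hwu, hw⟩ := H.exists_ne_odd_degree_of_exists_odd_degree u (by simpa [hdeg] using hu)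
  by_cases hreach : G.Reachable u w
  · by_contra huv
    rw [hdeg, if_pos hreach] at hw
    exact Nat.not_even_iff_odd.mpr hw (heven w hwu fun h ↦ huv (h ▸ hreach))
  · simp [hdeg, hreach] at hw

theorem Reachable.map_mem_connectedComponentIn {X : Type*} [TopologicalSpace X] {φ : V → X}
    {W : Set X} (hφ : ∀ ⦃x y⦄, G.Adj x y → φ y ∈ connectedComponentIn W (φ x)) {u v : V}
    (h : G.Reachable u v) (hu : φ u ∈ W) : φ v ∈ connectedComponentIn W (φ u) := by
  obtain ⟨p⟩ := h
  induction p with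
  | nil => exact mem_connectedComponentIn hu
  | cons hadj _ ih =>
    have h := hφ hadj
    rw [connectedComponentIn_eq h]
    exact ih (connectedComponentIn_subset _ _ h)

instance {n : ℕ} : DecidableRel (pathGraph n).Adj := fun _ _ ↦ decidable_of_iff _ pathGraph_adj.symm

theorem pathGraph_degree {n : ℕ} (i : Fin (n + 1)) :
    (pathGraph (n + 1)).degree i =
      (if (i : ℕ) = n then 0 else 1) + (if (i : ℕ) = 0 then 0 else 1) := by
  rw [← card_neighborFinset_eq_degree, neighborFinset_eq_filter]
  simp only [pathGraph_adj]
  rw [filter_or, card_union_of_disjoint (disjoint_filter.mpr fun _ _ _ ↦ by omega)]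
  congr 1 <;> split_ifs
  · exact card_eq_zero.mpr (filter_eq_empty_iff.mpr fun k _ ↦ by omega)
  · exact card_eq_one.mpr ⟨⟨i + 1, by omega⟩, by
      ext k; simp only [mem_filter, mem_univ, true_and, mem_singleton, Fin.ext_iff]; omega⟩
  · exact card_eq_zero.mpr (filter_eq_empty_iff.mpr fun k _ ↦ by omega)
  · exact card_eq_one.mpr ⟨⟨i - 1, by omega⟩, by
      ext k; simp only [mem_filter, mem_univ, true_and, mem_singleton, Fin.ext_iff]; omega⟩

end SimpleGraph

section Discrete

open Finset SimpleGraph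

structure IsClimb (M : ℤ) (n : ℕ) (A : ℕ → ℤ) : Prop where
  zero : A 0 = 0
  last : A n = M
  step : ∀ i < n, A (i + 1) = A i + 1 ∨ A (i + 1) = A i - 1
  nonneg : ∀ i ≤ n, 0 ≤ A i
  le : ∀ i ≤ n, A i ≤ M

def levelGraph (A B : ℕ → ℤ) (m n : ℕ) : SimpleGraph (Fin (m + 1) × Fin (n + 1)) where
  Adj u v := (pathGraph (m + 1)).Adj u.1 v.1 ∧ (pathGraph (n + 1)).Adj u.2 v.2 ∧
    A u.1 = B u.2 ∧ A v.1 = B v.2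
  symm := ⟨fun _ _ h ↦ ⟨h.1.symm, h.2.1.symm, h.2.2.2, h.2.2.1⟩⟩
  loopless := ⟨fun _ h ↦ h.1.ne rfl⟩

def neighborsAtHeight {n : ℕ} (A : ℕ → ℤ) (i : Fin (n + 1)) (c : ℤ) : Finset (Fin (n + 1)) :=
  {k | (pathGraph (n + 1)).Adj i k ∧ A k = c}

variable {M : ℤ} {m n : ℕ} {A B : ℕ → ℤ}

@[simp]
theorem levelGraph_adj {u v : Fin (m + 1) × Fin (n + 1)} :
    (levelGraph A B m n).Adj u v ↔ (pathGraph (m + 1)).Adj u.1 v.1 ∧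
      (pathGraph (n + 1)).Adj u.2 v.2 ∧ A u.1 = B u.2 ∧ A v.1 = B v.2 :=
  Iff.rfl

instance : DecidableRel (levelGraph A B m n).Adj := fun _ _ ↦ inferInstanceAs (Decidable (_ ∧ _))

theorem eq_add_one_or_eq_sub_one_of_adj
    (hstep : ∀ i < n, A (i + 1) = A i + 1 ∨ A (i + 1) = A i - 1) {i k : Fin (n + 1)}
    (h : (pathGraph (n + 1)).Adj i k) : A k = A i + 1 ∨ A k = A i - 1 := by
  rcases pathGraph_adj.mp h with h | h
  · rw [← h]; exact hstep i (by omega)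
  · rw [← h]; have := hstep k (by omega); omega

theorem card_neighborsAtHeight_add (hstep : ∀ i < n, A (i + 1) = A i + 1 ∨ A (i + 1) = A i - 1)
    (i : Fin (n + 1)) :
    #(neighborsAtHeight A i (A i + 1)) + #(neighborsAtHeight A i (A i - 1)) =
      (pathGraph (n + 1)).degree i := by
  rw [← card_neighborFinset_eq_degree, neighborFinset_eq_filter,
    ← card_filter_add_card_filter_not (s := {k | (pathGraph (n + 1)).Adj i k})
      (fun k ↦ A k = A i + 1), filter_filter, filter_filter]
  congr 2
  ext k
  simp only [neighborsAtHeight, mem_filter, mem_univ, true_and, and_congr_right_iff]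
  intro hik
  have := eq_add_one_or_eq_sub_one_of_adj hstep hik
  omega

theorem IsClimb.neighborsAtHeight_eq_empty (hA : IsClimb M n A) {i : Fin (n + 1)} {c : ℤ}
    (hc : c < 0 ∨ M < c) : neighborsAtHeight A i c = ∅ := by
  rw [neighborsAtHeight, filter_eq_empty_iff]
  rintro k - ⟨-, rfl⟩
  have := hA.nonneg k (Nat.lt_succ_iff.mp k.2)
  have := hA.le k (Nat.lt_succ_iff.mp k.2)
  omega

theorem levelGraph_degree (hAstep : ∀ i < m, A (i + 1) = A i + 1 ∨ A (i + 1) = A i - 1)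
    {i : Fin (m + 1)} {j : Fin (n + 1)} (h : A i = B j) :
    (levelGraph A B m n).degree (i, j) =
      #(neighborsAtHeight A i (A i + 1)) * #(neighborsAtHeight B j (A i + 1)) +
        #(neighborsAtHeight A i (A i - 1)) * #(neighborsAtHeight B j (A i - 1)) := by
  rw [← card_neighborFinset_eq_degree, neighborFinset_eq_filter,
    card_eq_sum_card_fiberwise (f := fun w ↦ A w.1) (t := {A i + 1, A i - 1}),
    sum_pair (by omega), ← card_product, ← card_product]
  · congr 1 <;> congr 1 <;> ext ⟨k, l⟩ <;>
      simp only [mem_filter, levelGraph_adj, neighborsAtHeight, mem_product, mem_univ, true_and] <;>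
      exact ⟨fun ⟨⟨hik, hjl, _, hkl⟩, hk⟩ ↦ ⟨⟨hik, hk⟩, hjl, hkl ▸ hk⟩,
        fun ⟨⟨hik, hk⟩, hjl, hl⟩ ↦ ⟨⟨hik, hjl, h, hk.trans hl.symm⟩, hk⟩⟩
  · intro w hw
    simpa using eq_add_one_or_eq_sub_one_of_adj hAstep (mem_filter.mp hw).2.1

theorem levelGraph_degree_of_ne {i : Fin (m + 1)} {j : Fin (n + 1)} (h : A i ≠ B j) :
    (levelGraph A B m n).degree (i, j) = 0 := by
  rw [← card_neighborFinset_eq_degree, card_eq_zero, neighborFinset_eq_filter, filter_eq_empty_iff]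
  exact fun _ _ hw ↦ h hw.2.2.1

theorem IsClimb.exists_levelGraph_degree_eq (hA : IsClimb M m A) (hB : IsClimb M n B)
    {i : Fin (m + 1)} {j : Fin (n + 1)} {c : ℤ} (hi : A i = c) (hj : B j = c) :
    ∃ uA dA uB dB : ℕ, (levelGraph A B m n).degree (i, j) = uA * uB + dA * dB ∧
      uA + dA = (if (i : ℕ) = m then 0 else 1) + (if (i : ℕ) = 0 then 0 else 1) ∧
      uB + dB = (if (j : ℕ) = n then 0 else 1) + (if (j : ℕ) = 0 then 0 else 1) ∧
      (c = 0 → dA = 0 ∧ dB = 0) ∧ (c = M → uA = 0 ∧ uB = 0) := by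
  subst hi
  refine ⟨_, _, _, _, levelGraph_degree hA.step hj.symm,
    (card_neighborsAtHeight_add hA.step i).trans (pathGraph_degree i), ?_, fun hc ↦ ?_, fun hc ↦ ?_⟩
  · rw [← pathGraph_degree, ← card_neighborsAtHeight_add hB.step j, hj]
  · rw [hA.neighborsAtHeight_eq_empty (by omega), hB.neighborsAtHeight_eq_empty (by omega)]
    simp
  · rw [hA.neighborsAtHeight_eq_empty (by omega), hB.neighborsAtHeight_eq_empty (by omega)]
    simp

theorem IsClimb.levelGraph_reachable (hM : 0 < M) (hA : IsClimb M m A) (hB : IsClimb M n B) :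
    (levelGraph A B m n).Reachable (0, 0) (Fin.last m, Fin.last n) := by
  have hm : m ≠ 0 := by rintro rfl; have := hA.last; rw [hA.zero] at this; omega
  have hn : n ≠ 0 := by rintro rfl; have := hB.last; rw [hB.zero] at this; omega
  refine reachable_of_odd_degree ?_ ?_
  · obtain ⟨uA, dA, uB, dB, h, hsA, hsB, hbot, -⟩ :=
      hA.exists_levelGraph_degree_eq hB (i := 0) (j := 0) hA.zero hB.zero
    rw [h, Nat.odd_add, Nat.odd_mul, Nat.even_mul]
    simp only [Nat.odd_iff, Nat.even_iff, Fin.val_zero] at hsA hsB ⊢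
    grind
  · rintro ⟨i, j⟩ h0 hlast
    by_cases hij : A i = B j
    · obtain ⟨uA, dA, uB, dB, h, hsA, hsB, hbot, htop⟩ :=
        hA.exists_levelGraph_degree_eq hB rfl hij.symm
      have hi0 : (i : ℕ) = 0 → A i = 0 := fun h ↦ by rw [h, hA.zero]
      have him : (i : ℕ) = m → A i = M := fun h ↦ by rw [h, hA.last]
      have hj0 : (j : ℕ) = 0 → B j = 0 := fun h ↦ by rw [h, hB.zero]
      have hjn : (j : ℕ) = n → B j = M := fun h ↦ by rw [h, hB.last]
      have h0' : ¬((i : ℕ) = 0 ∧ (j : ℕ) = 0) := fun h ↦ h0 (Prod.ext (Fin.ext h.1) (Fin.ext h.2))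
      have hlast' : ¬((i : ℕ) = m ∧ (j : ℕ) = n) :=
        fun h ↦ hlast (Prod.ext (Fin.ext h.1) (Fin.ext h.2))
      -- Off the two corners either both indices are interior, so `uA ≡ dA` and `uB ≡ dB`, or the
      -- height is `0` (or `M`) and some interior index has two neighbours above (or below).
      rw [h, Nat.even_add, Nat.even_mul, Nat.even_mul]
      simp only [Nat.even_iff]
      grind
    · rw [levelGraph_degree_of_ne hij]
      exact Even.zero

end Discrete

noncomputable def greedyClimb (x : ℕ → ℝ) : ℕ → ℤ
  | 0 => 0
  | i + 1 =>
    if greedyClimb x i = 0 ∨ (greedyClimb x i : ℝ) < x (i + 1) then greedyClimb x i + 1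
    else greedyClimb x i - 1

section Greedy

variable {M : ℤ} {x : ℕ → ℝ}

theorem greedyClimb_succ (i : ℕ) :
    greedyClimb x (i + 1) = greedyClimb x i + 1 ∨ greedyClimb x (i + 1) = greedyClimb x i - 1 := by
  rw [greedyClimb]
  split_ifs <;> simp

theorem greedyClimb_mem (hM : 0 < M) (hx0 : x 0 = 0) (hx : ∀ i, x i ∈ Set.Icc 0 (M : ℝ))
    (hstep : ∀ i, |x (i + 1) - x i| ≤ 1 / 2) (i : ℕ) :
    greedyClimb x i ∈ Set.Icc 0 M ∧ |(greedyClimb x i : ℝ) - x i| ≤ 1 := by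
  induction i with
  | zero => simp [greedyClimb, hx0, hM.le]
  | succ i ih =>
    obtain ⟨⟨hlo, hhi⟩, happrox⟩ := ih
    obtain ⟨hxlo, hxhi⟩ := hx (i + 1)
    have hs := abs_le.mp (hstep i)
    rw [abs_le] at happrox ⊢
    rw [greedyClimb]
    split_ifs with hup
    · rcases hup with h0 | hlt
      · rw [h0] at happrox ⊢
        push_cast at happrox ⊢
        exact ⟨⟨zero_le_one, hM⟩, by linarith, by linarith⟩
      · have : greedyClimb x i < M := by exact_mod_cast hlt.trans_le hxhi
        push_cast
        exact ⟨⟨by omega, by omega⟩, by linarith, by linarith⟩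
    · rw [not_or, not_lt] at hup
      have : 0 < greedyClimb x i := lt_of_le_of_ne hlo (Ne.symm hup.1)
      push_cast
      exact ⟨⟨by omega, by omega⟩, by linarith, by linarith⟩

theorem exists_isClimb_near (hM : 0 < M) (hx0 : x 0 = 0) (hx : ∀ i, x i ∈ Set.Icc 0 (M : ℝ))
    (hstep : ∀ i, |x (i + 1) - x i| ≤ 1 / 2) {n : ℕ} (hxn : x n = M) :
    ∃ m ≥ n, IsClimb M m (greedyClimb x) ∧ ∀ i, |(greedyClimb x i : ℝ) - x i| ≤ 1 := by
  have hmem := greedyClimb_mem hM hx0 hx hstep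
  have hclimb : ∀ m, greedyClimb x m = M → IsClimb M m (greedyClimb x) := fun m hm ↦
    ⟨rfl, hm, fun i _ ↦ greedyClimb_succ i, fun i _ ↦ (hmem i).1.1, fun i _ ↦ (hmem i).1.2⟩
  obtain ⟨⟨-, hle⟩, hnear⟩ := hmem n
  rw [hxn, abs_le] at hnear
  rcases eq_or_lt_of_le hle with heq | hlt
  · exact ⟨n, le_rfl, hclimb n heq, fun i ↦ (hmem i).2⟩
  · have hprev : greedyClimb x n = M - 1 := by
      have : (M : ℝ) - 1 ≤ greedyClimb x n := by linarith
      have : M - 1 ≤ greedyClimb x n := by exact_mod_cast this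
      omega
    have hup : greedyClimb x (n + 1) = M := by
      have hs := abs_le.mp (hstep n)
      rw [greedyClimb, if_pos (Or.inr (by push_cast [hprev]; linarith)), hprev]
      ring
    exact ⟨n + 1, n.le_succ, hclimb _ hup, fun i ↦ (hmem i).2⟩

end Greedy

open Set

section Compactness

variable {X : Type*} [TopologicalSpace X] [T2Space X]

theorem IsCompact.exists_separation_of_notMem_connectedComponentIn {N : Set X} (hN : IsCompact N)
    {x y : X} (hx : x ∈ N) (hy : y ∈ N) (h : y ∉ connectedComponentIn N x) :
    ∃ U V : Set X, IsOpen U ∧ IsOpen V ∧ Disjoint U V ∧ N ⊆ U ∪ V ∧ x ∈ U ∧ y ∈ V := by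
  have : CompactSpace N := isCompact_iff_compactSpace.mp hN
  rw [connectedComponentIn_eq_image hx] at h
  have h' : (⟨y, hy⟩ : N) ∉ connectedComponent ⟨x, hx⟩ := fun h' ↦ h ⟨_, h', rfl⟩
  rw [connectedComponent_eq_iInter_isClopen, mem_iInter, not_forall] at h'
  obtain ⟨⟨Z, hZ, hxZ⟩, hyZ⟩ := h'
  obtain ⟨U, V, hU, hV, hZU, hZV, hUV⟩ := SeparatedNhds.of_isCompact_isCompact
    (hZ.isClosed.isCompact.image continuous_subtype_val)
    (hZ.compl.isClosed.isCompact.image continuous_subtype_val)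
    (disjoint_image_of_injective Subtype.val_injective disjoint_compl_right)
  refine ⟨U, V, hU, hV, hUV, fun p hp ↦ ?_, hZU ⟨_, hxZ, rfl⟩, hZV ⟨⟨y, hy⟩, hyZ, rfl⟩⟩
  by_cases hpZ : (⟨p, hp⟩ : N) ∈ Z
  exacts [Or.inl (hZU ⟨_, hpZ, rfl⟩), Or.inr (hZV ⟨_, hpZ, rfl⟩)]

theorem mem_connectedComponentIn_iInter {ι : Type*} [Nonempty ι] {K : ι → Set X}
    (hK : Directed (· ⊇ ·) K) (hKc : ∀ i, IsCompact (K i)) {x y : X}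
    (h : ∀ i, y ∈ connectedComponentIn (K i) x) : y ∈ connectedComponentIn (⋂ i, K i) x := by
  by_contra hy
  have hx : ∀ i, x ∈ K i := fun i ↦ connectedComponentIn_nonempty_iff.mp ⟨y, h i⟩
  have hcompact : IsCompact (⋂ i, K i) := by
    obtain ⟨i⟩ := ‹Nonempty ι›
    exact (hKc i).of_isClosed_subset (isClosed_iInter fun i ↦ (hKc i).isClosed) (iInter_subset K i)
  obtain ⟨U, V, hU, hV, hUV, hsub, hxU, hyV⟩ :=
    hcompact.exists_separation_of_notMem_connectedComponentIn (mem_iInter.2 hx)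
      (mem_iInter.2 fun i ↦ connectedComponentIn_subset _ _ (h i)) hy
  obtain ⟨i, hi⟩ :=
    exists_subset_nhds_of_isCompact hK hKc fun z hz ↦ (hU.union hV).mem_nhds (hsub hz)
  obtain ⟨z, -, hzU, hzV⟩ := isPreconnected_connectedComponentIn U V hU hV
    ((connectedComponentIn_subset _ _).trans hi) ⟨x, mem_connectedComponentIn (hx i), hxU⟩
    ⟨y, h i, hyV⟩
  exact disjoint_left.mp hUV hzU hzV

end Compactness

theorem mem_connectedComponentIn_of_uIcc_prod_subset {α β : Type*}
    [ConditionallyCompleteLinearOrder α] [TopologicalSpace α] [OrderTopology α] [DenselyOrdered α]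
    [ConditionallyCompleteLinearOrder β] [TopologicalSpace β] [OrderTopology β] [DenselyOrdered β]
    {W : Set (α × β)} {a a' : α} {b b' : β} (h : uIcc a a' ×ˢ uIcc b b' ⊆ W) :
    (a', b') ∈ connectedComponentIn W (a, b) :=
  (isPreconnected_uIcc.prod isPreconnected_uIcc).subset_connectedComponentIn
    ⟨left_mem_uIcc, left_mem_uIcc⟩ h ⟨right_mem_uIcc, right_mem_uIcc⟩

theorem Subtype.dist_le_of_mem_uIcc {s : Set ℝ} {a b p : s} (h : p ∈ uIcc a b) :
    dist p a ≤ dist a b := by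
  rw [Subtype.dist_eq, Subtype.dist_eq]
  refine Real.dist_le_of_mem_uIcc ?_ left_mem_uIcc
  rw [mem_uIcc] at h ⊢
  exact_mod_cast h

theorem Continuous.eventually_forall_dist_le {X Y : Type*} [PseudoMetricSpace X] [CompactSpace X]
    [PseudoMetricSpace Y] {f : X → Y} (hf : Continuous f) {η : ℝ} (hη : 0 < η) :
    ∀ᶠ N : ℕ in atTop, ∀ x y, dist x y ≤ 1 / N → dist (f x) (f y) ≤ η := by
  obtain ⟨δ, hδ, hf⟩ :=
    Metric.uniformContinuous_iff.mp (CompactSpace.uniformContinuous_of_continuous hf) η hη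
  filter_upwards [tendsto_one_div_atTop_nhds_zero_nat.eventually (gt_mem_nhds hδ)]
    with N hN x y hxy
  exact (hf (hxy.trans_lt hN)).le

noncomputable def gridPoint (N i : ℕ) : I := projIcc 0 1 zero_le_one (i / N)

@[simp]
theorem gridPoint_zero (N : ℕ) : gridPoint N 0 = 0 := by
  simp [gridPoint]

theorem gridPoint_of_le {N i : ℕ} (hN : 0 < N) (h : N ≤ i) : gridPoint N i = 1 := by
  refine projIcc_of_right_le _ ?_
  rw [le_div_iff₀ (by positivity), one_mul]
  exact_mod_cast h

theorem dist_gridPoint_succ (N i : ℕ) : dist (gridPoint N i) (gridPoint N (i + 1)) ≤ 1 / N := by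
  refine ((LipschitzWith.projIcc zero_le_one).dist_le_mul _ _).trans ?_
  rw [NNReal.coe_one, one_mul, Real.dist_eq, Nat.cast_succ, ← sub_div, sub_add_cancel_left,
    abs_div, abs_neg, abs_one, Nat.abs_cast]

theorem dist_gridPoint_le_of_adj (N : ℕ) {n : ℕ} {i k : Fin (n + 1)}
    (h : (SimpleGraph.pathGraph (n + 1)).Adj i k) :
    dist (gridPoint N i) (gridPoint N k) ≤ 1 / N := by
  rcases SimpleGraph.pathGraph_adj.mp h with h | h
  · rw [← h]; exact dist_gridPoint_succ N i
  · rw [← h, dist_comm]; exact dist_gridPoint_succ N k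

theorem exists_isClimb_near_gridPoint {f : I → I} (hf0 : f 0 = 0) (hf1 : f 1 = 1) {M : ℤ}
    {N : ℕ} (hM : 0 < M) (hN : 0 < N)
    (hf : ∀ x y, dist x y ≤ 1 / N → dist (f x) (f y) ≤ 1 / (2 * M)) :
    ∃ m ≥ N, ∃ A, IsClimb M m A ∧ ∀ i, |(A i : ℝ) - M * f (gridPoint N i)| ≤ 1 := by
  have hMR : (0 : ℝ) < M := by exact_mod_cast hM
  have hstep (i : ℕ) :
      |M * (f (gridPoint N (i + 1)) : ℝ) - M * f (gridPoint N i)| ≤ 1 / 2 := by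
    rw [← mul_sub, abs_mul, abs_of_pos hMR, ← Real.dist_eq, ← Subtype.dist_eq, dist_comm]
    calc (M : ℝ) * dist (f (gridPoint N i)) (f (gridPoint N (i + 1)))
        ≤ M * (1 / (2 * M)) := by gcongr; exact hf _ _ (dist_gridPoint_succ N i)
      _ = 1 / 2 := by field_simp
  obtain ⟨m, hm, hA, hnear⟩ := exists_isClimb_near (x := fun i ↦ M * (f (gridPoint N i) : ℝ)) hM
    (by simp [hf0]) (fun i ↦ ⟨mul_nonneg hMR.le (f _).2.1, mul_le_of_le_one_right hMR.le (f _).2.2⟩)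
    hstep (n := N) (by simp [gridPoint_of_le hN le_rfl, hf1])
  exact ⟨m, hm, _, hA, hnear⟩

theorem mem_connectedComponentIn_dist_le_three_div {f₁ f₂ : I → I} (h₁0 : f₁ 0 = 0)
    (h₂0 : f₂ 0 = 0) (h₁1 : f₁ 1 = 1) (h₂1 : f₂ 1 = 1) {M : ℤ} {N : ℕ} (hM : 0 < M) (hN : 0 < N)
    (hf₁ : ∀ x y, dist x y ≤ 1 / N → dist (f₁ x) (f₁ y) ≤ 1 / (2 * M))
    (hf₂ : ∀ x y, dist x y ≤ 1 / N → dist (f₂ x) (f₂ y) ≤ 1 / (2 * M)) :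
    ((1 : I), (1 : I)) ∈
      connectedComponentIn {p : I × I | dist (f₁ p.1) (f₂ p.2) ≤ 3 / M} (0, 0) := by
  have hMR : (0 : ℝ) < M := by exact_mod_cast hM
  obtain ⟨m₁, hm₁, A, hA, hA'⟩ := exists_isClimb_near_gridPoint h₁0 h₁1 hM hN hf₁
  obtain ⟨m₂, hm₂, B, hB, hB'⟩ := exists_isClimb_near_gridPoint h₂0 h₂1 hM hN hf₂
  have hadj : ∀ ⦃u v⦄, (levelGraph A B m₁ m₂).Adj u v →
      (gridPoint N v.1, gridPoint N v.2) ∈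
        connectedComponentIn {p : I × I | dist (f₁ p.1) (f₂ p.2) ≤ 3 / M}
          (gridPoint N u.1, gridPoint N u.2) := by
    rintro u v ⟨h₁, h₂, huv, -⟩
    refine mem_connectedComponentIn_of_uIcc_prod_subset fun p hp ↦ ?_
    have hp₁ :=
      hf₁ _ _ ((Subtype.dist_le_of_mem_uIcc hp.1).trans (dist_gridPoint_le_of_adj N h₁))
    have hp₂ :=
      hf₂ _ _ ((Subtype.dist_le_of_mem_uIcc hp.2).trans (dist_gridPoint_le_of_adj N h₂))
    have hmid : dist (f₁ (gridPoint N u.1)) (f₂ (gridPoint N u.2)) ≤ 2 / M := by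
      have h₁ := abs_le.mp (hA' u.1)
      have h₂ := abs_le.mp (hB' u.2)
      rw [huv] at h₁
      rw [Subtype.dist_eq, Real.dist_eq, le_div_iff₀ hMR, ← abs_of_pos hMR, ← abs_mul, abs_le]
      constructor <;> linarith
    show dist (f₁ p.1) (f₂ p.2) ≤ 3 / M
    calc dist (f₁ p.1) (f₂ p.2)
        ≤ dist (f₁ p.1) (f₁ (gridPoint N u.1)) + dist (f₁ (gridPoint N u.1)) (f₂ (gridPoint N u.2))
            + dist (f₂ (gridPoint N u.2)) (f₂ p.2) := dist_triangle4 _ _ _ _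
      _ ≤ 1 / (2 * M) + 2 / M + 1 / (2 * M) := by rw [dist_comm (f₂ _)]; gcongr
      _ = 3 / M := by field_simp; ring
  have hbase : dist (f₁ (gridPoint N (0 : Fin (m₁ + 1)))) (f₂ (gridPoint N (0 : Fin (m₂ + 1))))
      ≤ 3 / M := by
    simp only [Fin.val_zero, gridPoint_zero, h₁0, h₂0, dist_self]
    positivity
  simpa [gridPoint_of_le hN hm₁, gridPoint_of_le hN hm₂] using
    (hA.levelGraph_reachable hM hB).map_mem_connectedComponentIn hadj hbase

theorem mem_connectedComponentIn_dist_le {f₁ f₂ : I → I} (hf₁ : Continuous f₁)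
    (hf₂ : Continuous f₂) (h₁0 : f₁ 0 = 0) (h₂0 : f₂ 0 = 0) (h₁1 : f₁ 1 = 1) (h₂1 : f₂ 1 = 1)
    {ε : ℝ} (hε : 0 < ε) :
    ((1 : I), (1 : I)) ∈ connectedComponentIn {p : I × I | dist (f₁ p.1) (f₂ p.2) ≤ ε} (0, 0) := by
  obtain ⟨M, hM⟩ := exists_int_gt (3 / ε)
  have hMR : (0 : ℝ) < M := (by positivity : (0 : ℝ) < 3 / ε).trans hM
  have hη : (0 : ℝ) < 1 / (2 * M) := by positivity
  obtain ⟨N, hN, h₁, h₂⟩ := ((eventually_gt_atTop 0).and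
    ((hf₁.eventually_forall_dist_le hη).and (hf₂.eventually_forall_dist_le hη))).exists
  refine connectedComponentIn_mono _ (fun p hp ↦ ?_)
    (mem_connectedComponentIn_dist_le_three_div h₁0 h₂0 h₁1 h₂1 (by exact_mod_cast hMR) hN h₁ h₂)
  exact hp.trans ((div_le_iff₀ hMR).2 (by linarith [(div_lt_iff₀ hε).1 hM]))

theorem stmt_2 (f₁ f₂ : unitInterval → unitInterval)
    (hf₁ : Continuous f₁) (hf₂ : Continuous f₂)
    (h₁0 : f₁ 0 = 0) (h₂0 : f₂ 0 = 0) (h₁1 : f₁ 1 = 1) (h₂1 : f₂ 1 = 1) :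
    ((1 : unitInterval), (1 : unitInterval)) ∈
      connectedComponentIn {p : unitInterval × unitInterval | f₁ p.1 = f₂ p.2}
        ((0 : unitInterval), (0 : unitInterval)) := by
  have hlevel : {p : I × I | f₁ p.1 = f₂ p.2} =
      ⋂ k : ℕ, {p : I × I | dist (f₁ p.1) (f₂ p.2) ≤ 1 / (k + 1)} := by
    ext p
    simp only [mem_ofPred_eq, mem_iInter, ← dist_le_zero (x := f₁ p.1)]
    exact ⟨fun h k ↦ h.trans (by positivity),
      fun h ↦ ge_of_tendsto' tendsto_one_div_add_atTop_nhds_zero_nat h⟩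
  rw [hlevel]
  refine mem_connectedComponentIn_iInter
    (Antitone.directed_ge fun k l hkl ↦ ofPred_subset_ofPred.2 fun p hp ↦ hp.trans (by gcongr))
    (fun k ↦ (isClosed_le (by fun_prop) continuous_const).isCompact)
    fun k ↦ mem_connectedComponentIn_dist_le hf₁ hf₂ h₁0 h₂0 h₁1 h₂1 (by positivity)
end

section
/- Suppose A₁, A₂ are closed subsets of S¹ with A₁ ∪ A₂ = S¹. Then at least one of A₁, A₂ contains a pair of antipodal points. -/
open Metric

local notation "S" => Metric.sphere (0 : EuclideanSpace ℝ (Fin 2)) 1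

lemma sphere_neg_continuous : Continuous (fun x : S => (-x : S)) := by
  apply Continuous.subtype_mk
  exact continuous_neg.comp continuous_subtype_val

theorem stmt_7 (f : Metric.sphere (0 : EuclideanSpace ℝ (Fin 2)) 1 → ℝ)
    (hf : Continuous f)
    (A₁ A₂ : Set (Metric.sphere (0 : EuclideanSpace ℝ (Fin 2)) 1))
    (hA₁ : IsClosed A₁) (hA₂ : IsClosed A₂) (hcover : A₁ ∪ A₂ = Set.univ) :
    (∃ a, a ∈ A₁ ∧ -a ∈ A₁) ∨ (∃ a, a ∈ A₂ ∧ -a ∈ A₂) := by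
  have hne : Nonempty S := (NormedSpace.sphere_nonempty.mpr zero_le_one).to_subtype
  have hpc : PreconnectedSpace S := by
    apply Subtype.preconnectedSpace
    refine isPreconnected_sphere ?_ 0 1
    rw [← Module.finrank_eq_rank ℝ, finrank_euclideanSpace_fin]
    exact_mod_cast one_lt_two
  obtain ⟨p⟩ := hne
  by_cases hA₁e : A₁ = ∅
  · right
    have h1 : p ∈ A₁ ∪ A₂ := hcover ▸ Set.mem_univ _
    have h2 : -p ∈ A₁ ∪ A₂ := hcover ▸ Set.mem_univ _
    exact ⟨p, by simpa [hA₁e] using h1, by simpa [hA₁e] using h2⟩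
  · have hA₁ne : A₁.Nonempty := Set.nonempty_iff_ne_empty.mpr hA₁e
    set φ : S → ℝ := fun x => infDist x A₁ - infDist (-x) A₁ with hφ
    have hcont : Continuous φ :=
      (continuous_infDist_pt A₁).sub
        ((continuous_infDist_pt A₁).comp sphere_neg_continuous)
    have hnegneg : ∀ x : S, -(-x) = x := by
      intro x; ext; simp
    have hodd : ∀ x : S, φ (-x) = -φ x := by
      intro x; simp [hφ, hnegneg x]
    have hzero : ∃ x : S, φ x = 0 := by
      rcases le_total (φ p) 0 with h | h
      · have h2 : (0 : ℝ) ≤ φ (-p) := by rw [hodd]; linarith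
        have := intermediate_value_univ₂ (a := p) (b := -p) hcont continuous_const h
          (by simpa using h2)
        simpa using this
      · have h2 : φ (-p) ≤ 0 := by rw [hodd]; linarith
        have := intermediate_value_univ₂ (a := -p) (b := p) hcont continuous_const h2
          (by simpa using h)
        simpa using this
    obtain ⟨x, hx⟩ := hzero
    have heq : infDist x A₁ = infDist (-x) A₁ := by
      simp only [hφ] at hx; linarith
    by_cases h0 : infDist x A₁ = 0
    · left
      refine ⟨x, ?_, ?_⟩
      · exact (hA₁.mem_iff_infDist_zero hA₁ne).mpr h0
      · exact (hA₁.mem_iff_infDist_zero hA₁ne).mpr (heq ▸ h0)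
    · right
      have hx1 : x ∉ A₁ := fun h => h0 (by
        rw [(hA₁.mem_iff_infDist_zero hA₁ne)] at h; exact h)
      have hx2 : (-x) ∉ A₁ := fun h => h0 (by
        rw [(hA₁.mem_iff_infDist_zero hA₁ne)] at h; rw [heq]; exact h)
      have hmem : ∀ y : S, y ∉ A₁ → y ∈ A₂ := by
        intro y hy
        have : y ∈ A₁ ∪ A₂ := hcover ▸ Set.mem_univ y
        exact this.resolve_left hy
      exact ⟨x, hmem x hx1, hmem (-x) hx2⟩
end
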